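/- Let v be the longest element of W₁ and let t ∈ T = {w ∈ W | w(B₁) = B₁}. Set Q⁺ = {α ∈ Q(t) | (ρ′, α) > 0} and Q⁻ = {α ∈ Q(t) | (ρ′, α) < 0}. Then the map α ↦ vα is a permutation of Q(t) which interchanges Q⁺ and Q⁻. -/

import Mathlib

open scoped Classical RealInnerProductSpace

/-!
Let `M = span B₁`. Products of reflections in roots of `R₁` move every vector by an element of
`M`, and `t` preserves `M`. Since `B` is linearly independent there is a linear functional
counting the coefficients of a root at the simple roots outside `B₁`: it vanishes on `M`, is
nonnegative on `R⁺` and positive on `R⁺ \ M`, so a root congruent modulo `M` to a positive root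
outside `M` is itself positive. For `β ∈ Q(t)` this applies to `vβ ≡ β` and to `-t(vβ) ≡ -tβ`,
once we know `β ∉ M`; the latter holds because `t` permutes `B₁`, hence preserves the height of
the roots in `M` and sends the positive ones to positive roots. So `v` maps the finite set `Q(t)`
injectively into itself. Finally `v` sends `R₁⁺` to `-R₁⁺`, so `vρ' = -ρ'` and
`(ρ', vα) = -(ρ', α)`.
-/

open Set

lemma Finset.image_eq_self_of_mapsTo {α : Type*} [DecidableEq α] {f : α → α}
    (hf : Function.Injective f) {s : Finset α} (h : ∀ x ∈ s, f x ∈ s) : s.image f = s :=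
  Finset.eq_of_subset_of_card_le (Finset.image_subset_iff.2 h)
    (Finset.card_image_of_injective s hf).ge

lemma Finset.image_filter_of_image_eq {α : Type*} [DecidableEq α] {f : α → α} {s : Finset α}
    (hs : s.image f = s) {p q : α → Prop} [DecidablePred p] [DecidablePred q]
    (hpq : ∀ x, p (f x) ↔ q x) : (s.filter q).image f = s.filter p := by
  conv_rhs => rw [← hs]
  rw [Finset.filter_image]
  simp only [hpq]

lemma exists_linearMap_eqOn {K : Type*} [Field K] {E : Type*} [AddCommGroup E] [Module K E]
    {s : Set E} (hs : LinearIndepOn K id s) (w : E → K) : ∃ φ : E →ₗ[K] K, EqOn φ w s := by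
  refine ⟨(Module.Basis.extend hs).constr K fun i => w i, fun b hb => ?_⟩
  simpa using (Module.Basis.extend hs).constr_basis K (fun i => w i) ⟨b, hs.subset_extend _ hb⟩

section

variable {V : Type*} [NormedAddCommGroup V] [InnerProductSpace ℝ V]

lemma mapsTo_of_mem_closure {R : Finset V} {S : Set (V ≃ₗᵢ[ℝ] V)}
    (hS : ∀ g ∈ S, MapsTo g R R) {g : V ≃ₗᵢ[ℝ] V} (hg : g ∈ Subgroup.closure S) :
    MapsTo g R R := by
  induction hg using Subgroup.closure_induction with
  | mem g hg => exact hS g hg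
  | one => exact mapsTo_id _
  | mul g h _ _ hg hh => exact hg.comp hh
  | inv g _ hg =>
    intro β hβ
    obtain ⟨γ, hγ, rfl⟩ :=
      ((R.finite_toSet.injOn_iff_bijOn_of_mapsTo hg).1 g.injective.injOn).surjOn hβ
    simpa using hγ

lemma sub_mem_of_mem_closure {M : Submodule ℝ V} {S : Set (V ≃ₗᵢ[ℝ] V)}
    (hS : ∀ g ∈ S, ∀ x, g x - x ∈ M) {g : V ≃ₗᵢ[ℝ] V} (hg : g ∈ Subgroup.closure S) (x : V) :
    g x - x ∈ M := by
  induction hg using Subgroup.closure_induction generalizing x with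
  | mem g hg => exact hS g hg x
  | one => simp
  | mul g h _ _ hg hh =>
    simpa using M.add_mem (hg (h x)) (hh x)
  | inv g _ hg =>
    simpa using M.neg_mem (hg (g⁻¹ x))

lemma reflection_sub_mem {s : V ≃ₗᵢ[ℝ] V} {α : V} {M : Submodule ℝ V}
    (hs : ∀ x, s x = x - (2 * ⟪x, α⟫ / ⟪α, α⟫) • α) (hα : α ∈ M) (x : V) : s x - x ∈ M := by
  rw [hs, sub_sub_cancel_left]
  exact M.neg_mem (M.smul_mem _ hα)

lemma apply_mem_span_iff {B1 : Finset V} {t : V ≃ₗᵢ[ℝ] V} (ht : B1.image t = B1) (x : V) :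
    t x ∈ Submodule.span ℝ (B1 : Set V) ↔ x ∈ Submodule.span ℝ (B1 : Set V) := by
  have hmap : (Submodule.span ℝ (B1 : Set V)).map t.toLinearEquiv.toLinearMap =
      Submodule.span ℝ (B1 : Set V) := by
    rw [Submodule.map_span]
    congr 1
    exact_mod_cast ht
  conv_lhs => rw [← hmap]
  rw [Submodule.mem_map_equiv]
  simp

lemma map_sum_eq_neg {v : V ≃ₗᵢ[ℝ] V} {P : Finset V} (hv : P.image v = P.image Neg.neg) :
    v (∑ γ ∈ P, γ) = -∑ γ ∈ P, γ := by
  calc v (∑ γ ∈ P, γ) = ∑ γ ∈ P.image v, γ := by rw [map_sum, Finset.sum_image v.injective.injOn]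
    _ = -∑ γ ∈ P, γ := by rw [hv, Finset.sum_image neg_injective.injOn, Finset.sum_neg_distrib]

lemma inner_map_eq_neg {v : V ≃ₗᵢ[ℝ] V} {ρ : V} (hv : v ρ = -ρ) (x : V) :
    ⟪ρ, v x⟫ = -⟪ρ, x⟫ := by
  calc ⟪ρ, v x⟫ = ⟪-v ρ, v x⟫ := by rw [hv, neg_neg]
    _ = -⟪ρ, x⟫ := by rw [inner_neg_left, v.inner_map_map]

section Height

variable {Rpos B B1 : Finset V} {ψ : V →ₗ[ℝ] ℝ}

lemma map_sum_nat_smul (hψ : ∀ b ∈ B, ψ b = if b ∈ B1 then 0 else 1) (c : V → ℕ) :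
    ψ (∑ b ∈ B, (c b : ℝ) • b) = ∑ b ∈ B \ B1, (c b : ℝ) := by
  rw [map_sum, ← Finset.filter_notMem_eq_sdiff, Finset.sum_filter]
  refine Finset.sum_congr rfl fun b hb => ?_
  rw [map_smul, hψ b hb]
  split_ifs <;> simp

lemma map_eq_zero_of_mem_span (hB1B : B1 ⊆ B) (hψ : ∀ b ∈ B, ψ b = if b ∈ B1 then 0 else 1)
    {x : V} (hx : x ∈ Submodule.span ℝ (B1 : Set V)) : ψ x = 0 := by
  refine (Submodule.span_le (p := LinearMap.ker ψ)).2 (fun b hb => ?_) hx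
  simp [hψ b (hB1B hb), Finset.mem_coe.1 hb]

lemma map_nonneg_of_mem (hBgen : ∀ α ∈ Rpos, ∃ c : V → ℕ, α = ∑ b ∈ B, (c b : ℝ) • b)
    (hψ : ∀ b ∈ B, ψ b = if b ∈ B1 then 0 else 1) {γ : V} (hγ : γ ∈ Rpos) : 0 ≤ ψ γ := by
  obtain ⟨c, rfl⟩ := hBgen γ hγ
  rw [map_sum_nat_smul hψ]
  positivity

lemma map_pos_of_notMem_span (hBgen : ∀ α ∈ Rpos, ∃ c : V → ℕ, α = ∑ b ∈ B, (c b : ℝ) • b)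
    (hB1B : B1 ⊆ B) (hψ : ∀ b ∈ B, ψ b = if b ∈ B1 then 0 else 1) {γ : V} (hγ : γ ∈ Rpos)
    (hγB1 : γ ∉ Submodule.span ℝ (B1 : Set V)) : 0 < ψ γ := by
  refine (map_nonneg_of_mem hBgen hψ hγ).lt_of_ne' fun h0 => hγB1 ?_
  obtain ⟨c, rfl⟩ := hBgen γ hγ
  rw [map_sum_nat_smul hψ, Finset.sum_eq_zero_iff_of_nonneg (fun _ _ => by positivity)] at h0
  rw [← Finset.sum_sdiff hB1B, Finset.sum_eq_zero fun b hb => by simp [h0 b hb], zero_add]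
  exact Submodule.sum_mem _ fun b hb => Submodule.smul_mem _ _ (Submodule.subset_span hb)

end Height

section PositiveRoots

variable {R Rpos B B1 : Finset V}

theorem mem_of_sub_mem_span (hB : LinearIndepOn ℝ id (B : Set V))
    (hBgen : ∀ α ∈ Rpos, ∃ c : V → ℕ, α = ∑ b ∈ B, (c b : ℝ) • b) (hB1B : B1 ⊆ B) {γ y : V}
    (hγ : γ ∈ Rpos) (hγB1 : γ ∉ Submodule.span ℝ (B1 : Set V)) (hy : y ∈ Rpos ∨ -y ∈ Rpos)
    (hyγ : y - γ ∈ Submodule.span ℝ (B1 : Set V)) : y ∈ Rpos := by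
  obtain ⟨ψ, hψ⟩ := exists_linearMap_eqOn hB fun b => if b ∈ B1 then 0 else 1
  have hψy : ψ y = ψ γ := by
    have := map_eq_zero_of_mem_span hB1B hψ hyγ
    rwa [map_sub, sub_eq_zero] at this
  refine hy.resolve_right fun hy' => ?_
  have := map_nonneg_of_mem hBgen hψ hy'
  rw [map_neg, hψy] at this
  linarith [map_pos_of_notMem_span hBgen hB1B hψ hγ hγB1]

theorem apply_mem_of_mem_span (hB : LinearIndepOn ℝ id (B : Set V))
    (hBgen : ∀ α ∈ Rpos, ∃ c : V → ℕ, α = ∑ b ∈ B, (c b : ℝ) • b) (hB1B : B1 ⊆ B)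
    {t : V ≃ₗᵢ[ℝ] V} (htB1 : MapsTo t B1 B1) {β : V} (hβ : β ∈ Rpos) (hβ0 : β ≠ 0)
    (hβB1 : β ∈ Submodule.span ℝ (B1 : Set V)) (htβ : t β ∈ Rpos ∨ -t β ∈ Rpos) : t β ∈ Rpos := by
  obtain ⟨height, hheight⟩ := exists_linearMap_eqOn hB fun b => if b ∈ (∅ : Finset V) then 0 else 1
  have hinv : height (t β) = height β :=
    LinearMap.eqOn_span' (f := height ∘ₗ t.toLinearEquiv.toLinearMap) (g := height)
      (fun b hb => by simp [hheight (hB1B (htB1 hb)), hheight (hB1B hb)]) hβB1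
  refine htβ.resolve_right fun hneg => ?_
  have := map_nonneg_of_mem hBgen hheight hneg
  rw [map_neg, hinv] at this
  linarith [map_pos_of_notMem_span hBgen (Finset.empty_subset B) hheight hβ (by simpa using hβ0)]

noncomputable def inversionSet (Rpos : Finset V) (w : V → V) : Finset V :=
  Rpos.filter fun β => -(w β) ∈ Rpos

theorem notMem_span_of_mem_inversionSet (hB : LinearIndepOn ℝ id (B : Set V))
    (hBgen : ∀ α ∈ Rpos, ∃ c : V → ℕ, α = ∑ b ∈ B, (c b : ℝ) • b) (hB1B : B1 ⊆ B)
    (hR0 : ∀ α ∈ R, α ≠ 0) (hRposSub : Rpos ⊆ R)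
    (hRsplit : ∀ α ∈ R, (α ∈ Rpos ∨ -α ∈ Rpos) ∧ ¬(α ∈ Rpos ∧ -α ∈ Rpos))
    {t : V ≃ₗᵢ[ℝ] V} (htR : MapsTo t R R) (htB1 : MapsTo t B1 B1) {β : V}
    (hβ : β ∈ inversionSet Rpos t) : β ∉ Submodule.span ℝ (B1 : Set V) := by
  rw [inversionSet, Finset.mem_filter] at hβ
  intro hβB1
  have htβR := htR (hRposSub hβ.1)
  exact (hRsplit _ htβR).2 ⟨apply_mem_of_mem_span hB hBgen hB1B htB1 hβ.1
    (hR0 _ (hRposSub hβ.1)) hβB1 (hRsplit _ htβR).1, hβ.2⟩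

theorem apply_mem_inversionSet (hB : LinearIndepOn ℝ id (B : Set V))
    (hBgen : ∀ α ∈ Rpos, ∃ c : V → ℕ, α = ∑ b ∈ B, (c b : ℝ) • b) (hB1B : B1 ⊆ B)
    (hR0 : ∀ α ∈ R, α ≠ 0) (hRposSub : Rpos ⊆ R)
    (hRsplit : ∀ α ∈ R, (α ∈ Rpos ∨ -α ∈ Rpos) ∧ ¬(α ∈ Rpos ∧ -α ∈ Rpos))
    {t v : V ≃ₗᵢ[ℝ] V} (htR : MapsTo t R R) (ht : B1.image t = B1) (hvR : MapsTo v R R)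
    (hvB1 : ∀ x, v x - x ∈ Submodule.span ℝ (B1 : Set V)) {β : V}
    (hβ : β ∈ inversionSet Rpos t) : v β ∈ inversionSet Rpos t := by
  have htB1 : MapsTo t B1 B1 := fun b hb => ht ▸ Finset.mem_image_of_mem t hb
  have hβB1 := notMem_span_of_mem_inversionSet hB hBgen hB1B hR0 hRposSub hRsplit htR htB1 hβ
  rw [inversionSet, Finset.mem_filter] at hβ ⊢
  have hvβR : v β ∈ R := hvR (hRposSub hβ.1)
  refine ⟨mem_of_sub_mem_span hB hBgen hB1B hβ.1 hβB1 (hRsplit _ hvβR).1 (hvB1 β), ?_⟩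
  refine mem_of_sub_mem_span hB hBgen hB1B hβ.2 ?_ ?_ ?_
  · rwa [Submodule.neg_mem_iff, apply_mem_span_iff ht]
  · simpa [or_comm] using (hRsplit _ (htR hvβR)).1
  · rw [sub_neg_eq_add, neg_add_eq_sub, ← neg_sub, ← map_sub]
    exact Submodule.neg_mem _ ((apply_mem_span_iff ht _).2 (hvB1 β))

end PositiveRoots

end

theorem stmt_7_general
    {V : Type*} [NormedAddCommGroup V] [InnerProductSpace ℝ V]
    (R : Finset V)
    (hR0 : ∀ α ∈ R, α ≠ 0)
    (s : V → (V ≃ₗᵢ[ℝ] V))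
    (hs : ∀ α ∈ R, ∀ x : V, s α x = x - (2 * ⟪x, α⟫ / ⟪α, α⟫) • α)
    (hRs : ∀ α ∈ R, ∀ β ∈ R, s α β ∈ R)
    (W : Subgroup (V ≃ₗᵢ[ℝ] V))
    (hW : W = Subgroup.closure {g | ∃ α ∈ R, g = s α})
    (Rpos : Finset V) (hRposSub : Rpos ⊆ R)
    (hRsplit : ∀ α ∈ R, (α ∈ Rpos ∨ -α ∈ Rpos) ∧ ¬(α ∈ Rpos ∧ -α ∈ Rpos))
    (B : Finset V)
    (hBindep : LinearIndependent ℝ (Subtype.val : {x : V // x ∈ B} → V))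
    (hBgen : ∀ α ∈ Rpos, ∃ c : V → ℕ, α = ∑ b ∈ B, (c b : ℝ) • b)
    (B1 : Finset V) (hB1B : B1 ⊆ B)
    (R1 : Finset V)
    (hR1 : ∀ α, α ∈ R1 ↔ α ∈ R ∧ (α : V) ∈ Submodule.span ℝ (B1 : Set V))
    (W1 : Subgroup (V ≃ₗᵢ[ℝ] V))
    (hW1 : W1 = Subgroup.closure {g | ∃ α ∈ R1, g = s α})
    (v : V ≃ₗᵢ[ℝ] V) (hvW1 : v ∈ W1)
    (hv : Finset.image (fun α => v α) (R1 ∩ Rpos)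
      = Finset.image (fun α => -α) (R1 ∩ Rpos))
    (t : V ≃ₗᵢ[ℝ] V) (htW : t ∈ W)
    (ht : Finset.image (fun α => t α) B1 = B1) :
    Finset.image (fun α => v α) (Rpos.filter (fun β => -(t β) ∈ Rpos))
        = Rpos.filter (fun β => -(t β) ∈ Rpos) ∧
    Finset.image (fun α => v α)
        ((Rpos.filter (fun β => -(t β) ∈ Rpos)).filter
          (fun α => 0 < ⟪(2⁻¹ : ℝ) • ∑ γ ∈ R1 ∩ Rpos, γ, α⟫))
      = (Rpos.filter (fun β => -(t β) ∈ Rpos)).filter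
          (fun α => ⟪(2⁻¹ : ℝ) • ∑ γ ∈ R1 ∩ Rpos, γ, α⟫ < 0) ∧
    Finset.image (fun α => v α)
        ((Rpos.filter (fun β => -(t β) ∈ Rpos)).filter
          (fun α => ⟪(2⁻¹ : ℝ) • ∑ γ ∈ R1 ∩ Rpos, γ, α⟫ < 0))
      = (Rpos.filter (fun β => -(t β) ∈ Rpos)).filter
          (fun α => 0 < ⟪(2⁻¹ : ℝ) • ∑ γ ∈ R1 ∩ Rpos, γ, α⟫) := by
  have hR1R : R1 ⊆ R := fun α hα => ((hR1 α).1 hα).1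
  have hW1W : W1 ≤ W := hW1 ▸ hW ▸ Subgroup.closure_mono fun _ ⟨α, hα, hg⟩ => ⟨α, hR1R hα, hg⟩
  have hWR : ∀ g ∈ W, MapsTo g R R := fun g hg =>
    mapsTo_of_mem_closure (by rintro _ ⟨α, hα, rfl⟩ β hβ; exact hRs α hα β hβ) (hW ▸ hg)
  have hvB1 : ∀ x, v x - x ∈ Submodule.span ℝ (B1 : Set V) :=
    sub_mem_of_mem_closure
      (by rintro _ ⟨α, hα, rfl⟩; exact reflection_sub_mem (hs α (hR1R hα)) ((hR1 α).1 hα).2)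
      (hW1 ▸ hvW1)
  have hQ : ∀ β ∈ inversionSet Rpos t, v β ∈ inversionSet Rpos t := fun β =>
    apply_mem_inversionSet hBindep hBgen hB1B hR0 hRposSub hRsplit (hWR t htW) ht
      (hWR v (hW1W hvW1)) hvB1
  have hQv : (inversionSet Rpos t).image v = inversionSet Rpos t :=
    Finset.image_eq_self_of_mapsTo v.injective hQ
  have hρ : ∀ x, ⟪(2⁻¹ : ℝ) • ∑ γ ∈ R1 ∩ Rpos, γ, v x⟫ = -⟪(2⁻¹ : ℝ) • ∑ γ ∈ R1 ∩ Rpos, γ, x⟫ :=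
    inner_map_eq_neg (by rw [map_smul, map_sum_eq_neg hv, smul_neg])
  exact ⟨hQv, Finset.image_filter_of_image_eq hQv fun x => by rw [hρ, neg_neg_iff_pos],
    Finset.image_filter_of_image_eq hQv fun x => by rw [hρ, neg_pos]⟩

/-- Context: `R` is a finite crystallographic root system in a real inner product
space `V`, with Weyl group `W` (generated by the reflections `s α`), positive
system `Rpos`, simple roots `B`; `B1 ⊆ B` and `R1` is the subroot system with
simple roots `B1`, with positive roots `R1 ∩ Rpos` and Weyl group `W1`. -/
theorem stmt_7
    {V : Type*} [NormedAddCommGroup V] [InnerProductSpace ℝ V]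
    (R : Finset V)
    (hR0 : ∀ α ∈ R, α ≠ 0)
    (hRcrys : ∀ α ∈ R, ∀ β ∈ R, ∃ n : ℤ, 2 * ⟪β, α⟫ / ⟪α, α⟫ = (n : ℝ))
    (hRred : ∀ α ∈ R, ∀ t : ℝ, t • α ∈ R → t = 1 ∨ t = -1)
    (s : V → (V ≃ₗᵢ[ℝ] V))
    (hs : ∀ α ∈ R, ∀ x : V, s α x = x - (2 * ⟪x, α⟫ / ⟪α, α⟫) • α)
    (hRs : ∀ α ∈ R, ∀ β ∈ R, s α β ∈ R)
    (W : Subgroup (V ≃ₗᵢ[ℝ] V))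
    (hW : W = Subgroup.closure {g | ∃ α ∈ R, g = s α})
    (Rpos : Finset V) (hRposSub : Rpos ⊆ R)
    (hRsplit : ∀ α ∈ R, (α ∈ Rpos ∨ -α ∈ Rpos) ∧ ¬(α ∈ Rpos ∧ -α ∈ Rpos))
    (B : Finset V) (hBsub : B ⊆ Rpos)
    (hBindep : LinearIndependent ℝ (Subtype.val : {x : V // x ∈ B} → V))
    (hBgen : ∀ α ∈ Rpos, ∃ c : V → ℕ, α = ∑ b ∈ B, (c b : ℝ) • b)
    (B1 : Finset V) (hB1B : B1 ⊆ B)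
    (R1 : Finset V)
    (hR1 : ∀ α, α ∈ R1 ↔ α ∈ R ∧ (α : V) ∈ Submodule.span ℝ (B1 : Set V))
    (W1 : Subgroup (V ≃ₗᵢ[ℝ] V))
    (hW1 : W1 = Subgroup.closure {g | ∃ α ∈ R1, g = s α})
    (v : V ≃ₗᵢ[ℝ] V) (hvW1 : v ∈ W1)
    (hv : Finset.image (fun α => v α) (R1 ∩ Rpos)
      = Finset.image (fun α => -α) (R1 ∩ Rpos))
    (t : V ≃ₗᵢ[ℝ] V) (htW : t ∈ W)
    (ht : Finset.image (fun α => t α) B1 = B1) :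
    Finset.image (fun α => v α) (Rpos.filter (fun β => -(t β) ∈ Rpos))
        = Rpos.filter (fun β => -(t β) ∈ Rpos) ∧
    Finset.image (fun α => v α)
        ((Rpos.filter (fun β => -(t β) ∈ Rpos)).filter
          (fun α => 0 < ⟪(2⁻¹ : ℝ) • ∑ γ ∈ R1 ∩ Rpos, γ, α⟫))
      = (Rpos.filter (fun β => -(t β) ∈ Rpos)).filter
          (fun α => ⟪(2⁻¹ : ℝ) • ∑ γ ∈ R1 ∩ Rpos, γ, α⟫ < 0) ∧
    Finset.image (fun α => v α)
        ((Rpos.filter (fun β => -(t β) ∈ Rpos)).filter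
          (fun α => ⟪(2⁻¹ : ℝ) • ∑ γ ∈ R1 ∩ Rpos, γ, α⟫ < 0))
      = (Rpos.filter (fun β => -(t β) ∈ Rpos)).filter
          (fun α => 0 < ⟪(2⁻¹ : ℝ) • ∑ γ ∈ R1 ∩ Rpos, γ, α⟫) :=
  stmt_7_general R hR0 s hs hRs W hW Rpos hRposSub hRsplit B hBindep hBgen B1 hB1B R1 hR1 W1 hW1 v
    hvW1 hv t htW ht
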